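/- Let E ⊆ V × V be an edge set with probabilities p_e ∈ [0,1]. Then the expected spread T ↦ σ_E(T) is a monotone and submodular function of the seed set: σ_E(T) ≤ σ_E(T') whenever T ⊆ T' ⊆ V, and σ_E(T ∪ {a}) − σ_E(T) ≥ σ_E(T' ∪ {a}) − σ_E(T') for all T ⊆ T' ⊆ V and a ∈ V ∖ T'. -/
import Mathlib


open scoped Classical

noncomputable section

/-- The set of nodes reachable from some node of `T` via edges of `g`
(every node reaches itself). -/
def Reach {V : Type*} (T : Finset V) (g : Finset (V × V)) : Set V :=
  {x | ∃ s ∈ T, Relation.ReflTransGen (fun a b => (a, b) ∈ g) s x}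

/-- Probability of the live-edge graph `g ⊆ F`. -/
def liveProb {V : Type*} [DecidableEq V] (F : Finset (V × V)) (p : V × V → ℝ)
    (g : Finset (V × V)) : ℝ :=
  (∏ e ∈ g, p e) * ∏ e ∈ F \ g, (1 - p e)

/-- The expected spread `σ_E(T)` of the seed set `T`. -/
def expSpread {V : Type*} [DecidableEq V] (F : Finset (V × V)) (p : V × V → ℝ)
    (T : Finset V) : ℝ :=
  ∑ g ∈ F.powerset, liveProb F p g * ((Reach T g).ncard : ℝ)

lemma liveProb_nonneg {V : Type*} [DecidableEq V] (F : Finset (V × V)) (p : V × V → ℝ)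
    (hp : ∀ e, 0 ≤ p e ∧ p e ≤ 1) (g : Finset (V × V)) : 0 ≤ liveProb F p g := by
  apply mul_nonneg
  · exact Finset.prod_nonneg fun e _ => (hp e).1
  · exact Finset.prod_nonneg fun e _ => by linarith [(hp e).2]

lemma Reach_mono {V : Type*} {T T' : Finset V} (h : T ⊆ T') (g : Finset (V × V)) :
    Reach T g ⊆ Reach T' g := fun x ⟨s, hs, hrel⟩ => ⟨s, h hs, hrel⟩

lemma Reach_insert {V : Type*} [DecidableEq V] (a : V) (T : Finset V) (g : Finset (V × V)) :
    Reach (insert a T) g = Reach {a} g ∪ Reach T g := by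
  ext x
  simp only [Reach, Set.mem_setOf_eq, Set.mem_union, Finset.mem_insert, Finset.mem_singleton]
  constructor
  · rintro ⟨s, hs | hs, hrel⟩
    · exact Or.inl ⟨s, hs, hrel⟩
    · exact Or.inr ⟨s, hs, hrel⟩
  · rintro (⟨s, hs, hrel⟩ | ⟨s, hs, hrel⟩)
    · exact ⟨s, Or.inl hs, hrel⟩
    · exact ⟨s, Or.inr hs, hrel⟩

lemma ncard_reach_insert {V : Type*} [Fintype V] [DecidableEq V] (a : V) (T : Finset V)
    (g : Finset (V × V)) :
    (Reach (insert a T) g).ncard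
      = (Reach {a} g \ Reach T g).ncard + (Reach T g).ncard := by
  rw [Reach_insert, ← Set.diff_union_self,
    Set.ncard_union_eq Set.disjoint_sdiff_left (Set.toFinite _) (Set.toFinite _)]

/-- The expected spread `T ↦ σ_E(T)` is a monotone and submodular function of the seed set. -/
theorem expSpread_monotone_submodular {V : Type*} [Fintype V] [DecidableEq V]
    (E : Finset (V × V)) (p : V × V → ℝ)
    (hp : ∀ e, 0 ≤ p e ∧ p e ≤ 1) :
    (∀ T T' : Finset V, T ⊆ T' → expSpread E p T ≤ expSpread E p T') ∧
    (∀ T T' : Finset V, T ⊆ T' → ∀ a ∉ T',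
      expSpread E p (insert a T') - expSpread E p T' ≤
        expSpread E p (insert a T) - expSpread E p T) := by
  constructor
  · intro T T' h
    apply Finset.sum_le_sum
    intro g _
    apply mul_le_mul_of_nonneg_left _ (liveProb_nonneg E p hp g)
    exact_mod_cast Set.ncard_le_ncard (Reach_mono h g) (Set.toFinite _)
  · intro T T' h a _
    rw [expSpread, expSpread, expSpread, expSpread, ← Finset.sum_sub_distrib,
      ← Finset.sum_sub_distrib]
    apply Finset.sum_le_sum
    intro g _
    rw [← mul_sub, ← mul_sub]
    apply mul_le_mul_of_nonneg_left _ (liveProb_nonneg E p hp g)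
    have h1 := ncard_reach_insert a T g
    have h2 := ncard_reach_insert a T' g
    have h3 : (Reach {a} g \ Reach T' g).ncard ≤ (Reach {a} g \ Reach T g).ncard :=
      Set.ncard_le_ncard (Set.diff_subset_diff_right (Reach_mono h g)) (Set.toFinite _)
    push_cast [h1, h2]
    linarith [(Nat.cast_le (α := ℝ)).mpr h3]
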